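/- Let ρ be a density matrix on ℂᵈ⊗ℂᵈ whose reduced state ρ_A = Tr_B(ρ) is singular (rank less than d). Then for any sequence of operators of the form (Vₙ⊗I)(I⊗Λₙ)(ρ) with Λₙ trace-preserving completely positive maps on the B factor, the normalized outputs can never converge to |Ψ₊⟩⟨Ψ₊|; indeed every pure state in the range of any such output has Schmidt rank at most rank(ρ_A) < d, so their singlet fractions are uniformly bounded by rank(ρ_A)/d. -/

import Mathlib

open Matrix Kronecker
open scoped ComplexOrder InnerProductSpace

noncomputable def psiPlus (d : ℕ) : Fin d × Fin d → ℂ :=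
  fun p => if p.1 = p.2 then ((1 / Real.sqrt d : ℝ) : ℂ) else 0

noncomputable def singletFraction {d : ℕ}
    (σ : Matrix (Fin d × Fin d) (Fin d × Fin d) ℂ) : ℝ :=
  (star (psiPlus d) ⬝ᵥ σ *ᵥ psiPlus d).re

/-- Alice's reduced density matrix (partial trace over the `B` factor). -/
noncomputable def reduceA {dA dB : ℕ} (ρ : Matrix (Fin dA × Fin dB) (Fin dA × Fin dB) ℂ) :
    Matrix (Fin dA) (Fin dA) ℂ :=
  Matrix.of fun i j => ∑ k, ρ (i, k) (j, k)

/-- The action `(V ⊗ I)(I ⊗ Λ)(ρ)(V ⊗ I)ᴴ` where `Λ` is given by Kraus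
operators `K`. -/
noncomputable def unilocOut {d : ℕ} (ρ : Matrix (Fin d × Fin d) (Fin d × Fin d) ℂ)
    (V : Matrix (Fin d) (Fin d) ℂ) {N : ℕ} (K : Fin N → Matrix (Fin d) (Fin d) ℂ) :
    Matrix (Fin d × Fin d) (Fin d × Fin d) ℂ :=
  (V ⊗ₖ (1 : Matrix (Fin d) (Fin d) ℂ)) *
    (∑ k, ((1 : Matrix (Fin d) (Fin d) ℂ) ⊗ₖ K k) * ρ *
      ((1 : Matrix (Fin d) (Fin d) ℂ) ⊗ₖ K k)ᴴ) *
    (V ⊗ₖ (1 : Matrix (Fin d) (Fin d) ℂ))ᴴ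

section AuxLemmas


-- L2a: trace of DᴴD zero implies D = 0
lemma aux_trace_zero {n : Type*} [Fintype n] [DecidableEq n] (D : Matrix n n ℂ)
    (h : (Dᴴ * D).trace = 0) : D = 0 := by
  have h2 : ∑ j, ∑ i, Complex.normSq (D i j) = 0 := by
    have := congrArg Complex.re h
    simpa [Matrix.trace, Matrix.mul_apply, Matrix.diag, Complex.re_sum,
      Matrix.conjTranspose_apply, Complex.normSq_apply, Complex.mul_conj'] using this
  ext i j
  have hnn : ∀ j' ∈ Finset.univ, (0:ℝ) ≤ ∑ i, Complex.normSq (D i j') :=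
    fun j' _ => Finset.sum_nonneg fun i _ => Complex.normSq_nonneg _
  have h3 := (Finset.sum_eq_zero_iff_of_nonneg hnn).1 h2 j (Finset.mem_univ j)
  have h4 := (Finset.sum_eq_zero_iff_of_nonneg
    (fun i' _ => Complex.normSq_nonneg (D i' j))).1 h3 i (Finset.mem_univ i)
  simpa using Complex.normSq_eq_zero.mp h4

open scoped MatrixOrder in
lemma aux_psd_eq {n : Type*} [Fintype n] [DecidableEq n] {A : Matrix n n ℂ}
    (hA : A.PosSemidef) : ∃ B : Matrix n n ℂ, A = Bᴴ * B := by
  obtain ⟨B, hB⟩ := CStarAlgebra.nonneg_iff_eq_star_mul_self.mp hA.nonneg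
  exact ⟨B, hB⟩

-- L2: PSD conjugation with zero trace kills product
lemma aux_mul_eq_zero {n : Type*} [Fintype n] [DecidableEq n] {ρ : Matrix n n ℂ}
    (hρ : ρ.PosSemidef) (C : Matrix n n ℂ) (h : (C * ρ * Cᴴ).trace = 0) : C * ρ = 0 := by
  obtain ⟨B, rfl⟩ := aux_psd_eq hρ
  have key : B * Cᴴ = 0 := by
    apply aux_trace_zero
    rw [← h]
    congr 1
    rw [Matrix.conjTranspose_mul, Matrix.conjTranspose_conjTranspose]
    noncomm_ring
  calc C * (Bᴴ * B) = (B*Cᴴ)ᴴ * B := by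
        rw [Matrix.conjTranspose_mul, Matrix.conjTranspose_conjTranspose, Matrix.mul_assoc]
    _ = 0 := by rw [key]; simp

-- L4: Cauchy-Schwarz style bound
lemma aux_cs {n : Type*} [Fintype n] [DecidableEq n] (B : Matrix n n ℂ) (φ : n → ℂ) :
    (star φ ⬝ᵥ (Bᴴ * B) *ᵥ φ).re ≤ (∑ q, Complex.normSq (φ q)) * ((Bᴴ * B).trace).re := by
  have hz : star φ ⬝ᵥ (Bᴴ * B) *ᵥ φ = star (B *ᵥ φ) ⬝ᵥ (B *ᵥ φ) := by
    rw [← Matrix.mulVec_mulVec, Matrix.dotProduct_mulVec, Matrix.vecMul_conjTranspose, star_star]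
  rw [hz]
  have hlhs : (star (B *ᵥ φ) ⬝ᵥ (B *ᵥ φ)).re = ∑ p, Complex.normSq ((B *ᵥ φ) p) := by
    simp [dotProduct, Complex.re_sum, Complex.normSq_apply]
  have hrhs : ((Bᴴ * B).trace).re = ∑ q, ∑ p, Complex.normSq (B p q) := by
    simp [Matrix.trace, Matrix.mul_apply, Matrix.diag, Complex.re_sum,
      Matrix.conjTranspose_apply, Complex.normSq_apply]
  rw [hlhs, hrhs]
  calc ∑ p, Complex.normSq ((B *ᵥ φ) p)
      ≤ ∑ p, (∑ q, Complex.normSq (B p q)) * (∑ q, Complex.normSq (φ q)) := by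
        apply Finset.sum_le_sum
        intro p _
        have h1 : ‖(B *ᵥ φ) p‖ ≤ ∑ q, ‖B p q‖ * ‖φ q‖ := by
          simpa [Matrix.mulVec, dotProduct] using
            (norm_sum_le Finset.univ (fun q => B p q * φ q))
        have h2 : (∑ q, ‖B p q‖ * ‖φ q‖)^2
            ≤ (∑ q, ‖B p q‖^2) * (∑ q, ‖φ q‖^2) :=
          Finset.sum_mul_sq_le_sq_mul_sq _ _ _
        have h0 : Complex.normSq ((B *ᵥ φ) p) = ‖(B *ᵥ φ) p‖^2 :=
          (Complex.sq_norm _).symm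
        rw [h0]
        refine le_trans (by exact pow_le_pow_left₀ (norm_nonneg _) h1 2) ?_
        simpa [Complex.sq_norm] using h2
    _ = (∑ q, Complex.normSq (φ q)) * (∑ q, ∑ p, Complex.normSq (B p q)) := by
        rw [← Finset.sum_mul, Finset.sum_comm, mul_comm]


lemma aux_vmv_mul {n : Type*} [Fintype n] (a b c e : n → ℂ) :
    vecMulVec a b * vecMulVec c e = (b ⬝ᵥ c) • vecMulVec a e := by
  ext i j
  simp only [Matrix.mul_apply, vecMulVec_apply, Matrix.smul_apply, dotProduct,
    Finset.sum_mul, smul_eq_mul]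
  apply Finset.sum_congr rfl
  intro k _
  ring

lemma aux_vmv_mulVec {n : Type*} [Fintype n] (a b x : n → ℂ) :
    vecMulVec a b *ᵥ x = (b ⬝ᵥ x) • a := by
  ext i
  simp only [Matrix.mulVec, dotProduct, vecMulVec_apply, Pi.smul_apply, smul_eq_mul,
    Finset.sum_mul]
  apply Finset.sum_congr rfl
  intro k _
  ring

lemma aux_sum_mulVec {ι n : Type*} [Fintype ι] [Fintype n] (f : ι → Matrix n n ℂ) (x : n → ℂ) :
    (∑ m, f m) *ᵥ x = ∑ m, f m *ᵥ x := by
  ext i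
  simp only [Matrix.mulVec, dotProduct, Matrix.sum_apply, Finset.sum_apply,
    Finset.sum_mul]
  rw [Finset.sum_comm]

lemma aux_vmv_trace {n : Type*} [Fintype n] (a : n → ℂ) :
    (vecMulVec a (star a)).trace = star a ⬝ᵥ a := by
  simp [Matrix.trace, Matrix.diag, vecMulVec_apply, dotProduct, mul_comm]

set_option maxHeartbeats 1000000 in
lemma aux_proj (d : ℕ) (M : Matrix (Fin d) (Fin d) ℂ) :
    ∃ Q : Matrix (Fin d) (Fin d) ℂ, Qᴴ = Q ∧ Q * Q = Q ∧ Q * M = M ∧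
      Q.trace = (M.rank : ℂ) := by
  classical
  set W : Submodule ℂ (EuclideanSpace ℂ (Fin d)) :=
    LinearMap.range (Matrix.toEuclideanLin M) with hW
  have hrank : M.rank = Module.finrank ℂ W := by
    rw [Matrix.rank_eq_finrank_range_toLin M (PiLp.basisFun 2 ℂ (Fin d)) (PiLp.basisFun 2 ℂ (Fin d))]
    rw [hW, Matrix.toEuclideanLin_eq_toLin]
  set b := stdOrthonormalBasis ℂ W with hb
  set u : Fin (Module.finrank ℂ W) → (Fin d → ℂ) :=
    fun m => (WithLp.equiv 2 (Fin d → ℂ)) ((b m : W) : EuclideanSpace ℂ (Fin d)) with hu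
  have hdot : ∀ (m : Fin (Module.finrank ℂ W)) (x : EuclideanSpace ℂ (Fin d)),
      star (u m) ⬝ᵥ (WithLp.equiv 2 (Fin d → ℂ) x) = ⟪((b m : W) : EuclideanSpace ℂ (Fin d)), x⟫_ℂ := by
    intro m x
    rw [PiLp.inner_apply]
    simp only [RCLike.inner_apply, dotProduct, Pi.star_apply, hu,
      WithLp.equiv_apply]
    exact Finset.sum_congr rfl fun _ _ => mul_comm _ _
  have horth : ∀ m m', star (u m) ⬝ᵥ u m' = if m = m' then 1 else 0 := by
    intro m m'
    rw [hu, hdot m, ← Submodule.coe_inner]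
    exact orthonormal_iff_ite.mp b.orthonormal m m'
  set Q : Matrix (Fin d) (Fin d) ℂ := ∑ m, vecMulVec (u m) (star (u m)) with hQ
  have hfix : ∀ x : Fin d → ℂ, ((WithLp.equiv 2 (Fin d → ℂ)).symm x ∈ W) → Q *ᵥ x = x := by
    intro x hx
    set y : W := ⟨(WithLp.equiv 2 (Fin d → ℂ)).symm x, hx⟩ with hy
    have hrep := b.sum_repr y
    have hrepm : ∀ m, b.repr y m = star (u m) ⬝ᵥ x := by
      intro m
      rw [b.repr_apply_apply, Submodule.coe_inner, ← hdot]
      congr 1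
    have hcoe : (((∑ m, b.repr y m • b m : W) : EuclideanSpace ℂ (Fin d))) = (y : EuclideanSpace ℂ (Fin d)) := by
      rw [hrep]
    rw [Submodule.coe_sum] at hcoe
    have hcoe2 := congrArg (WithLp.linearEquiv 2 ℂ (Fin d → ℂ)) hcoe
    rw [map_sum] at hcoe2
    have h1 : ∀ m : Fin (Module.finrank ℂ W),
        (WithLp.linearEquiv 2 ℂ (Fin d → ℂ)) ((b.repr y m • b m : W) : EuclideanSpace ℂ (Fin d))
          = (star (u m) ⬝ᵥ x) • u m := by
      intro m
      rw [Submodule.coe_smul, _root_.map_smul, hrepm m]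
      rfl
    have h2 : (WithLp.linearEquiv 2 ℂ (Fin d → ℂ)) (y : EuclideanSpace ℂ (Fin d)) = x := by
      simp [hy]
    have hfun : (∑ m, (star (u m) ⬝ᵥ x) • u m) = x := by
      calc (∑ m, (star (u m) ⬝ᵥ x) • u m)
          = ∑ m, (WithLp.linearEquiv 2 ℂ (Fin d → ℂ)) ((b.repr y m • b m : W) : EuclideanSpace ℂ (Fin d)) :=
            Finset.sum_congr rfl fun m _ => (h1 m).symm
        _ = (WithLp.linearEquiv 2 ℂ (Fin d → ℂ)) (y : EuclideanSpace ℂ (Fin d)) := hcoe2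
        _ = x := h2
    calc Q *ᵥ x = ∑ m, vecMulVec (u m) (star (u m)) *ᵥ x := by rw [hQ, aux_sum_mulVec]
      _ = ∑ m, (star (u m) ⬝ᵥ x) • u m :=
          Finset.sum_congr rfl fun m _ => aux_vmv_mulVec _ _ _
      _ = x := hfun
  have hherm : Qᴴ = Q := by
    rw [hQ]
    ext i j
    simp [Matrix.conjTranspose_apply, Matrix.sum_apply, vecMulVec_apply, Pi.star_apply,
      _root_.map_mul, mul_comm]
  have hidem : Q * Q = Q := by
    rw [hQ, Finset.sum_mul]
    simp_rw [Finset.mul_sum, aux_vmv_mul, horth]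
    rw [Finset.sum_comm]
    simp [Finset.sum_ite_eq, ite_smul]
  have hQM : Q * M = M := by
    ext i j
    have hcol : (WithLp.equiv 2 (Fin d → ℂ)).symm (fun k => M k j) ∈ W := by
      refine ⟨(WithLp.equiv 2 (Fin d → ℂ)).symm (Pi.single j 1), ?_⟩
      rw [WithLp.equiv_symm_apply, Matrix.toEuclideanLin_apply_piLp_toLp]
      congr 1
      funext k
      simp [Matrix.mulVec_single]
    have := congrFun (hfix _ hcol) i
    rw [Matrix.mul_apply]
    simpa [Matrix.mulVec, dotProduct] using this
  have htr : Q.trace = (M.rank : ℂ) := by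
    rw [hQ, Matrix.trace_sum]
    calc (∑ m, (vecMulVec (u m) (star (u m))).trace)
        = ∑ _m : Fin (Module.finrank ℂ W), (1:ℂ) := by
          refine Finset.sum_congr rfl fun m _ => ?_
          rw [aux_vmv_trace]
          have h := horth m m
          rw [if_pos rfl] at h
          exact h
      _ = (Module.finrank ℂ W : ℂ) := by simp
      _ = (M.rank : ℂ) := by rw [hrank]
  exact ⟨Q, hherm, hidem, hQM, htr⟩


-- kronecker conjTranspose
lemma aux_kron_conjT {d : ℕ} (A B : Matrix (Fin d) (Fin d) ℂ) :
    (A ⊗ₖ B)ᴴ = Aᴴ ⊗ₖ Bᴴ := by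
  ext ⟨i,j⟩ ⟨a,b⟩
  simp [conjTranspose_apply, kroneckerMap_apply]

-- trace of (M ⊗ 1) * ρ equals trace of M * reduceA ρ
lemma aux_trace_kron {d : ℕ} (M : Matrix (Fin d) (Fin d) ℂ)
    (ρ : Matrix (Fin d × Fin d) (Fin d × Fin d) ℂ) :
    ((M ⊗ₖ (1 : Matrix (Fin d) (Fin d) ℂ)) * ρ).trace = (M * reduceA ρ).trace := by
  simp only [Matrix.trace, Matrix.diag, Matrix.mul_apply, reduceA, Matrix.of_apply,
    kroneckerMap_apply, Fintype.sum_prod_type, Matrix.one_apply, mul_ite, ite_mul,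
    mul_zero, zero_mul, mul_one, one_mul, Finset.sum_ite_eq, Finset.sum_ite_eq',
    Finset.mem_univ, if_true, Finset.mul_sum]
  exact Finset.sum_congr rfl fun x _ => Finset.sum_comm

-- unilocOut as a sum of conjugations
lemma aux_uniloc {d : ℕ} (ρ : Matrix (Fin d × Fin d) (Fin d × Fin d) ℂ)
    (V : Matrix (Fin d) (Fin d) ℂ) {N : ℕ} (K : Fin N → Matrix (Fin d) (Fin d) ℂ) :
    unilocOut ρ V K = ∑ k, (V ⊗ₖ K k) * ρ * (V ⊗ₖ K k)ᴴ := by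
  rw [unilocOut, Finset.mul_sum, Finset.sum_mul]
  refine Finset.sum_congr rfl fun k _ => ?_
  have h1 : (V ⊗ₖ (1:Matrix (Fin d) (Fin d) ℂ)) * ((1:Matrix (Fin d) (Fin d) ℂ) ⊗ₖ K k)
      = V ⊗ₖ K k := by
    rw [← Matrix.mul_kronecker_mul, mul_one, one_mul]
  calc (V ⊗ₖ (1:Matrix (Fin d) (Fin d) ℂ)) * (((1:Matrix (Fin d) (Fin d) ℂ) ⊗ₖ K k) * ρ *
        ((1:Matrix (Fin d) (Fin d) ℂ) ⊗ₖ K k)ᴴ) * (V ⊗ₖ (1:Matrix (Fin d) (Fin d) ℂ))ᴴ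
      = ((V ⊗ₖ (1:Matrix (Fin d) (Fin d) ℂ)) * ((1:Matrix (Fin d) (Fin d) ℂ) ⊗ₖ K k)) * ρ *
        ((V ⊗ₖ (1:Matrix (Fin d) (Fin d) ℂ)) * ((1:Matrix (Fin d) (Fin d) ℂ) ⊗ₖ K k))ᴴ := by
        rw [Matrix.conjTranspose_mul]
        noncomm_ring
    _ = (V ⊗ₖ K k) * ρ * (V ⊗ₖ K k)ᴴ := by rw [h1]

lemma aux_dot_sum {n : Type*} [Fintype n] {ι : Type*} (s : Finset ι)
    (v : n → ℂ) (f : ι → n → ℂ) : v ⬝ᵥ (∑ k ∈ s, f k) = ∑ k ∈ s, v ⬝ᵥ f k := by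
  simp only [dotProduct, Finset.sum_apply, Finset.mul_sum]
  rw [Finset.sum_comm]

lemma aux_normsq_trace {n : Type*} [Fintype n] (Q : Matrix n n ℂ)
    (h1 : Qᴴ = Q) (h2 : Q * Q = Q) :
    ∑ i, ∑ j, Complex.normSq (Q i j) = (Q.trace).re := by
  have h3 : Q.trace = (Qᴴ * Q).trace := by rw [h1, h2]
  rw [h3]
  simp only [Matrix.trace, Matrix.diag, Matrix.mul_apply, Matrix.conjTranspose_apply,
    Complex.re_sum, Complex.normSq_apply]
  rw [Finset.sum_comm]
  refine Finset.sum_congr rfl fun i _ => Finset.sum_congr rfl fun j _ => ?_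
  simp [Complex.mul_re]

lemma aux_psd_trace {n : Type*} [Fintype n] [DecidableEq n] {σ : Matrix n n ℂ}
    (h : σ.PosSemidef) : σ.trace = (σ.trace.re : ℂ) ∧ 0 ≤ σ.trace.re := by
  have hd : ∀ i, σ i i = ((σ i i).re : ℂ) ∧ 0 ≤ (σ i i).re := by
    intro i
    have h2 := h.dotProduct_mulVec_nonneg (Pi.single i 1)
    have h3 : star (Pi.single i 1) ⬝ᵥ σ *ᵥ Pi.single i 1 = σ i i := by
      simp [dotProduct, Matrix.mulVec, Pi.single_apply, Finset.mul_sum]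
    rw [h3] at h2
    rw [Complex.le_def] at h2
    constructor
    · apply Complex.ext
      · simp
      · simpa using h2.2.symm
    · simpa using h2.1
  have him : σ.trace.im = 0 := by
    rw [Matrix.trace, Complex.im_sum]
    refine Finset.sum_eq_zero fun i _ => ?_
    have := congrArg Complex.im (hd i).1
    simpa using this
  constructor
  · exact Complex.ext (by simp) (by simp [him])
  · rw [Matrix.trace, Complex.re_sum]
    exact Finset.sum_nonneg fun i _ => (hd i).2

end AuxLemmas

set_option maxHeartbeats 1000000 in
lemma aux_key (d : ℕ) (hd : 0 < d)
    (ρ : Matrix (Fin d × Fin d) (Fin d × Fin d) ℂ) (hρ : ρ.PosSemidef)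
    (V : Matrix (Fin d) (Fin d) ℂ) (N : ℕ) (K : Fin N → Matrix (Fin d) (Fin d) ℂ) :
    (star (psiPlus d) ⬝ᵥ (unilocOut ρ V K) *ᵥ psiPlus d).re
      ≤ ((reduceA ρ).rank : ℝ)/d * ((unilocOut ρ V K).trace.re) := by
  classical
  obtain ⟨Q, hQH, hQQ, hQM, htrQ⟩ := aux_proj d (V * reduceA ρ)
  set ψ := psiPlus d with hψ
  set r : ℝ := ((reduceA ρ).rank : ℝ) with hr
  -- the rank bound
  have hrankle : ((V * reduceA ρ).rank : ℝ) ≤ r := by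
    exact_mod_cast Nat.cast_le.mpr (Matrix.rank_mul_le_right V (reduceA ρ))
  -- X kills ρ
  set X := Q * V - V with hX
  have hXA : X * reduceA ρ = 0 := by
    rw [hX, Matrix.sub_mul, Matrix.mul_assoc, hQM, sub_self]
  have htrX : ((X ⊗ₖ (1:Matrix (Fin d) (Fin d) ℂ)) * ρ *
      (X ⊗ₖ (1:Matrix (Fin d) (Fin d) ℂ))ᴴ).trace = 0 := by
    rw [Matrix.trace_mul_cycle]
    rw [aux_kron_conjT, conjTranspose_one, ← Matrix.mul_kronecker_mul, Matrix.one_mul]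
    rw [aux_trace_kron, Matrix.mul_assoc, hXA]
    simp
  have hXρ : (X ⊗ₖ (1:Matrix (Fin d) (Fin d) ℂ)) * ρ = 0 :=
    aux_mul_eq_zero hρ _ htrX
  -- Q ⊗ 1 fixes each (V ⊗ K k) * ρ
  have hQfix : ∀ k, (Q ⊗ₖ (1:Matrix (Fin d) (Fin d) ℂ)) * ((V ⊗ₖ K k) * ρ)
      = (V ⊗ₖ K k) * ρ := by
    intro k
    rw [← Matrix.mul_assoc, ← Matrix.mul_kronecker_mul]
    have hXk : ((Q * V) ⊗ₖ K k) * ρ - (V ⊗ₖ K k) * ρ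
        = ((1:Matrix (Fin d) (Fin d) ℂ) ⊗ₖ K k) * ((X ⊗ₖ (1:Matrix (Fin d) (Fin d) ℂ)) * ρ) := by
      rw [← Matrix.mul_assoc, ← Matrix.mul_kronecker_mul, one_mul, mul_one, hX]
      rw [← Matrix.sub_mul]
      congr 1
      ext ⟨i,j⟩ ⟨a,b⟩
      simp [kroneckerMap_apply, Matrix.sub_apply, sub_mul]
    have := hXk
    rw [hXρ, Matrix.mul_zero] at this
    have h2 := sub_eq_zero.mp this
    rw [one_mul]
    exact h2
  -- conjugation invariance and hermiticity of each term
  set T : Fin N → Matrix (Fin d × Fin d) (Fin d × Fin d) ℂ :=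
    fun k => (V ⊗ₖ K k) * ρ * (V ⊗ₖ K k)ᴴ with hT
  have hTpsd : ∀ k, (T k).PosSemidef := fun k => hρ.mul_mul_conjTranspose_same _
  have hQT : ∀ k, (Q ⊗ₖ (1:Matrix (Fin d) (Fin d) ℂ)) * T k
      * (Q ⊗ₖ (1:Matrix (Fin d) (Fin d) ℂ))ᴴ = T k := by
    intro k
    have h1 : (Q ⊗ₖ (1:Matrix (Fin d) (Fin d) ℂ)) * T k = T k := by
      rw [hT]
      show (Q ⊗ₖ (1:Matrix (Fin d) (Fin d) ℂ)) * ((V ⊗ₖ K k) * ρ * (V ⊗ₖ K k)ᴴ) = _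
      rw [← Matrix.mul_assoc, hQfix k]
    have hTh : (T k)ᴴ = T k := (hTpsd k).1
    calc (Q ⊗ₖ (1:Matrix (Fin d) (Fin d) ℂ)) * T k * (Q ⊗ₖ (1:Matrix (Fin d) (Fin d) ℂ))ᴴ
        = T k * (Q ⊗ₖ (1:Matrix (Fin d) (Fin d) ℂ))ᴴ := by rw [h1]
      _ = ((Q ⊗ₖ (1:Matrix (Fin d) (Fin d) ℂ)) * (T k)ᴴ)ᴴ := by
          rw [Matrix.conjTranspose_mul, Matrix.conjTranspose_conjTranspose]
      _ = T k := by rw [hTh, h1, hTh]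
  -- the projected vector
  set φ : Fin d × Fin d → ℂ := (Q ⊗ₖ (1:Matrix (Fin d) (Fin d) ℂ)) *ᵥ ψ with hφ
  have hφval : ∀ p : Fin d × Fin d, φ p = Q p.1 p.2 * ((1 / Real.sqrt d : ℝ) : ℂ) := by
    rintro ⟨i,j⟩
    rw [hφ]
    simp only [Matrix.mulVec, dotProduct, kroneckerMap_apply, Fintype.sum_prod_type,
      hψ, psiPlus, Matrix.one_apply]
    rw [Finset.sum_comm]
    simp [Finset.sum_ite_eq, mul_ite]
  have hφnorm : ∑ p, Complex.normSq (φ p) ≤ r / d := by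
    have h1 : ∑ p, Complex.normSq (φ p) = (Q.trace).re * (1/d) := by
      rw [← aux_normsq_trace Q hQH hQQ]
      rw [Fintype.sum_prod_type]
      rw [Finset.sum_mul]
      refine Finset.sum_congr rfl fun i _ => ?_
      rw [Finset.sum_mul]
      refine Finset.sum_congr rfl fun j _ => ?_
      rw [hφval ⟨i,j⟩]
      rw [Complex.normSq_mul]
      congr 1
      rw [Complex.normSq_ofReal]
      rw [div_mul_div_comm, one_mul, Real.mul_self_sqrt (Nat.cast_nonneg d)]
    rw [h1, htrQ]
    simp only [Complex.natCast_re]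
    rw [mul_one_div]
    apply div_le_div_of_nonneg_right hrankle (by exact_mod_cast hd.le)
  -- per-term bound
  have hherm2 : (Q ⊗ₖ (1:Matrix (Fin d) (Fin d) ℂ))ᴴ = Q ⊗ₖ (1:Matrix (Fin d) (Fin d) ℂ) := by
    rw [aux_kron_conjT, conjTranspose_one, hQH]
  have hterm : ∀ k, (star ψ ⬝ᵥ (T k) *ᵥ ψ).re ≤ r / d * ((T k).trace).re := by
    intro k
    have heq : star ψ ⬝ᵥ (T k) *ᵥ ψ = star φ ⬝ᵥ (T k) *ᵥ φ := by
      conv_lhs => rw [← hQT k]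
      rw [hherm2, ← Matrix.mulVec_mulVec, ← Matrix.mulVec_mulVec]
      rw [Matrix.dotProduct_mulVec]
      rw [(show star φ = star ψ ᵥ* (Q ⊗ₖ (1:Matrix (Fin d) (Fin d) ℂ)) by
        rw [hφ, Matrix.star_mulVec, hherm2]).symm]
    rw [heq]
    obtain ⟨B, hB⟩ := aux_psd_eq (hTpsd k)
    rw [hB]
    calc (star φ ⬝ᵥ (Bᴴ*B) *ᵥ φ).re
        ≤ (∑ q, Complex.normSq (φ q)) * ((Bᴴ*B).trace).re := aux_cs B φ
      _ ≤ r/d * ((Bᴴ*B).trace).re := by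
          apply mul_le_mul_of_nonneg_right hφnorm
          rw [← hB]
          exact (aux_psd_trace (hTpsd k)).2
  rw [aux_uniloc]
  have h1 : star ψ ⬝ᵥ (∑ k, (V ⊗ₖ K k) * ρ * (V ⊗ₖ K k)ᴴ) *ᵥ ψ
      = ∑ k, star ψ ⬝ᵥ (T k) *ᵥ ψ := by
    rw [aux_sum_mulVec, aux_dot_sum]
  rw [h1, Matrix.trace_sum, Complex.re_sum, Complex.re_sum, Finset.mul_sum]
  exact Finset.sum_le_sum fun k _ => hterm k

lemma aux_psd_sum {n : Type*} [Fintype n] [DecidableEq n] {ι : Type*} (s : Finset ι)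
    (f : ι → Matrix n n ℂ) (h : ∀ k ∈ s, (f k).PosSemidef) :
    (∑ k ∈ s, f k).PosSemidef := by
  classical
  induction s using Finset.induction_on with
  | empty => simpa using Matrix.PosSemidef.zero
  | insert a s hnot ih =>
    rw [Finset.sum_insert hnot]
    exact ((h _ (Finset.mem_insert_self _ _)).add
      (ih fun k hk => h k (Finset.mem_insert_of_mem hk)))

lemma aux_psiPlus_norm (d : ℕ) (hd : 0 < d) :
    star (psiPlus d) ⬝ᵥ psiPlus d = 1 := by
  have hsq : ((1 / Real.sqrt d : ℝ) : ℂ) * ((1 / Real.sqrt d : ℝ) : ℂ) = 1/(d:ℂ) := by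
    rw [← Complex.ofReal_mul, div_mul_div_comm, one_mul,
      Real.mul_self_sqrt (Nat.cast_nonneg d)]
    push_cast
    ring
  have hd0 : (d:ℂ) ≠ 0 := by exact_mod_cast hd.ne'
  have hterm : ∀ i j : Fin d,
      star (if i = j then ((1 / Real.sqrt d : ℝ) : ℂ) else 0) *
        (if i = j then ((1 / Real.sqrt d : ℝ) : ℂ) else 0) = if j = i then 1/(d:ℂ) else 0 := by
    intro i j
    by_cases h : i = j
    · subst h
      rw [if_pos rfl, if_pos rfl, Complex.star_def, Complex.conj_ofReal]
      exact hsq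
    · simp [h, Ne.symm h]
  simp only [dotProduct, Pi.star_apply, psiPlus, Fintype.sum_prod_type]
  rw [Finset.sum_congr rfl fun i _ => Finset.sum_congr rfl fun j _ => hterm i j]
  simp only [Finset.sum_ite_eq', Finset.mem_univ, if_true]
  rw [Finset.sum_const, Finset.card_univ, Fintype.card_fin, nsmul_eq_mul]
  field_simp

set_option maxHeartbeats 1000000 in
/-- if Alice's reduced state is singular (`rank ρ_A < d`) then
any output of a unilocal protocol `(V ⊗ I)(I ⊗ Λ_TP)` has singlet fraction at
most `rank(ρ_A)/d`; consequently no sequence of such normalized outputs can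
converge to `|Ψ₊⟩⟨Ψ₊|`. -/
theorem singular_reduced_state_no_oneway_quasidistillation
    (d : ℕ) (hd : 0 < d)
    (ρ : Matrix (Fin d × Fin d) (Fin d × Fin d) ℂ)
    (hρ : ρ.PosSemidef) (htr : ρ.trace = 1)
    (hsing : (reduceA ρ).rank < d) :
    (∀ (V : Matrix (Fin d) (Fin d) ℂ) (N : ℕ)
      (K : Fin N → Matrix (Fin d) (Fin d) ℂ),
      (∑ k, (K k)ᴴ * K k = 1) →
      0 < (unilocOut ρ V K).trace.re →
      singletFraction (((unilocOut ρ V K).trace)⁻¹ • unilocOut ρ V K)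
        ≤ ((reduceA ρ).rank : ℝ) / d) ∧
    (∀ (V : ℕ → Matrix (Fin d) (Fin d) ℂ) (N : ℕ → ℕ)
      (K : (n : ℕ) → Fin (N n) → Matrix (Fin d) (Fin d) ℂ),
      (∀ n, ∑ k, (K n k)ᴴ * K n k = 1) →
      (∀ n, 0 < (unilocOut ρ (V n) (K n)).trace.re) →
      ¬ Filter.Tendsto
          (fun n => ((unilocOut ρ (V n) (K n)).trace)⁻¹ • unilocOut ρ (V n) (K n))
          Filter.atTop (nhds (vecMulVec (psiPlus d) (star (psiPlus d))))) := by
  have hdr : (0:ℝ) < d := by exact_mod_cast hd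
  have hpart1 : ∀ (V : Matrix (Fin d) (Fin d) ℂ) (N : ℕ)
      (K : Fin N → Matrix (Fin d) (Fin d) ℂ),
      0 < (unilocOut ρ V K).trace.re →
      singletFraction (((unilocOut ρ V K).trace)⁻¹ • unilocOut ρ V K)
        ≤ ((reduceA ρ).rank : ℝ) / d := by
    intro V N K hpos
    set σ := unilocOut ρ V K with hσ
    have hσpsd : σ.PosSemidef := by
      rw [hσ, aux_uniloc]
      exact aux_psd_sum _ _ fun k _ => hρ.mul_mul_conjTranspose_same _
    obtain ⟨htreal, _⟩ := aux_psd_trace hσpsd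
    have hkey := aux_key d hd ρ hρ V N K
    rw [singletFraction, Matrix.smul_mulVec, dotProduct_smul, htreal,
      ← Complex.ofReal_inv, smul_eq_mul, Complex.re_ofReal_mul]
    rw [inv_mul_eq_div, div_le_iff₀ hpos]
    exact hkey
  refine ⟨fun V N K _ hpos => hpart1 V N K hpos, ?_⟩
  intro V N K hK hpos htend
  have hcont : Continuous
      (fun σ : Matrix (Fin d × Fin d) (Fin d × Fin d) ℂ => singletFraction σ) := by
    unfold singletFraction
    exact Complex.continuous_re.comp
      (continuous_const.dotProduct (continuous_id.matrix_mulVec continuous_const))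
  have hlim := (hcont.tendsto _).comp htend
  have hone : singletFraction (vecMulVec (psiPlus d) (star (psiPlus d))) = 1 := by
    rw [singletFraction, aux_vmv_mulVec, dotProduct_smul, aux_psiPlus_norm d hd]
    simp
  rw [hone] at hlim
  have hub : (1:ℝ) ≤ ((reduceA ρ).rank : ℝ) / d :=
    le_of_tendsto hlim (Filter.Eventually.of_forall fun n => hpart1 (V n) (N n) (K n) (hpos n))
  have hlt : ((reduceA ρ).rank : ℝ) / d < 1 := by
    rw [div_lt_one hdr]
    exact_mod_cast hsing
  linarith
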